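/- arXiv:2111.01737 — 7 statements merged into one kernel-verified Lean document; each statement's English description precedes it below -/
import Mathlib

section
/- (Symmetry Lemma) Let 0 < ε < 1/100 and let G = (U ∪ W, E) be a finite bipartite graph with U, W nonempty. Suppose there are U' ⊆ U and W' ⊆ W with |U'| ≥ (1−ε)|U| and |W'| ≥ (1−ε)|W| such that: for every u ∈ U', max{|N(u) ∩ W|, |W ∖ N(u)|} ≥ (1−ε)|W|, and for every w ∈ W', max{|N(w) ∩ U|, |U ∖ N(w)|} ≥ (1−ε)|U|. Then |E| ≤ 2√ε · |U||W| or |E| ≥ (1 − 2√ε)|U||W|. -/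
/-!
Put `s = √ε`. If the edge count lies strictly between `2s|U||W|` and `(1 - 2s)|U||W|`, then more
than `s|U|` vertices of `U'` have more than `ε|W|` neighbours, hence (by the dichotomy) at most
`ε|W|` non-neighbours; applying the same count to the complement relation read from `W`, more
than `s|W|` vertices of `W'` have at most `ε|U|` neighbours. Counting the pairs between these two
sets `A` and `B` as edges seen from `B` plus non-edges seen from `A` gives
`|A||B| ≤ ε|U||B| + ε|W||A| < 2s|A||B|`, impossible as `2s < 1`.
-/

open Finset

namespace Rel

variable {α β : Type*} (r : α → β → Prop)

noncomputable def highDegree [∀ a, DecidablePred (r a)] (s : Finset α) (t : Finset β)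
    (δ : ℝ) : Finset α :=
  {a ∈ s | δ < #{b ∈ t | r a b}}

theorem card_interedges_eq_sum [∀ a, DecidablePred (r a)] (s : Finset α) (t : Finset β) :
    #(interedges r s t) = ∑ a ∈ s, #{b ∈ t | r a b} := by
  rw [interedges, card_filter, sum_product]
  simp only [card_filter]

theorem card_interedges_swap [∀ a, DecidablePred (r a)] [∀ b, DecidablePred fun a => r a b]
    (s : Finset α) (t : Finset β) :
    #(interedges (fun b a => r a b) t s) = #(interedges r s t) := by
  rw [card_interedges_eq_sum, card_interedges_eq_sum]
  simp only [card_filter]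
  exact sum_comm

theorem card_interedges_add_card_interedges_swap_compl [∀ a, DecidablePred (r a)]
    [∀ b, DecidablePred fun a => r a b] (s : Finset α) (t : Finset β) :
    #(interedges r s t) + #(interedges (fun b a => ¬ r a b) t s) = #s * #t := by
  rw [card_interedges_swap (fun a b => ¬ r a b), card_interedges_add_card_interedges_compl]

theorem card_interedges_le_card_highDegree [∀ a, DecidablePred (r a)] {s s' : Finset α}
    (t : Finset β) {ε : ℝ} (hε : 0 ≤ ε) (hs' : s' ⊆ s) (hcard : (1 - ε) * #s ≤ #s') :
    (#(interedges r s t) : ℝ) ≤ (#(highDegree r s' t (ε * #t)) + 2 * ε * #s) * #t := by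
  classical
  set d : α → ℝ := fun a => #{b ∈ t | r a b}
  have hd : ∀ a, d a ≤ #t := fun a => by simp only [d]; exact_mod_cast card_filter_le _ _
  have hsum : (#(interedges r s t) : ℝ) =
      ∑ a ∈ s \ s', d a + ∑ a ∈ highDegree r s' t (ε * #t), d a +
        ∑ a ∈ s' with ¬ ε * #t < d a, d a := by
    rw [card_interedges_eq_sum, add_assoc, highDegree, sum_filter_add_sum_filter_not,
      sum_sdiff hs']
    push_cast; rfl
  have hout : ∑ a ∈ s \ s', d a ≤ ε * #s * #t := by
    have : (#(s \ s') : ℝ) ≤ ε * #s := by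
      rw [card_sdiff_of_subset hs', Nat.cast_sub (card_le_card hs')]
      linarith
    calc ∑ a ∈ s \ s', d a ≤ #(s \ s') * #t := by
          simpa using sum_le_card_nsmul _ d _ fun a _ => hd a
      _ ≤ ε * #s * #t := by gcongr
  have hhigh :
      ∑ a ∈ highDegree r s' t (ε * #t), d a ≤ #(highDegree r s' t (ε * #t)) * #t := by
    simpa using sum_le_card_nsmul _ d _ fun a _ => hd a
  have hlow : ∑ a ∈ s' with ¬ ε * #t < d a, d a ≤ ε * #s * #t := by
    calc ∑ a ∈ s' with ¬ ε * #t < d a, d a ≤ #s * (ε * #t) := by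
          refine (sum_le_card_nsmul _ d _ fun a ha => not_lt.1 (mem_filter.1 ha).2).trans ?_
          rw [nsmul_eq_mul]
          gcongr
          exact (filter_subset _ _).trans hs'
      _ = ε * #s * #t := by ring
  linarith

theorem card_filter_not_le_of_mem_highDegree [∀ a, DecidablePred (r a)] {s : Finset α}
    {t : Finset β} {ε : ℝ} {a : α} (ha : a ∈ highDegree r s t (ε * #t))
    (hmax : (1 - ε) * #t ≤ max (#{b ∈ t | r a b} : ℝ) #{b ∈ t | ¬ r a b}) :
    (#{b ∈ t | ¬ r a b} : ℝ) ≤ ε * #t := by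
  have hsum : (#{b ∈ t | r a b} + #{b ∈ t | ¬ r a b} : ℝ) = #t := by
    exact_mod_cast card_filter_add_card_filter_not (r a)
  rcases le_max_iff.1 hmax with h | h
  · linarith
  · linarith [(mem_filter.1 ha).2]

theorem card_filter_le_of_mem_highDegree_swap_compl [∀ b, DecidablePred fun a => r a b]
    {s : Finset α} {t : Finset β} {ε : ℝ} {b : β}
    (hb : b ∈ highDegree (fun b a => ¬ r a b) t s (ε * #s))
    (hmax : (1 - ε) * #s ≤ max (#{a ∈ s | r a b} : ℝ) #{a ∈ s | ¬ r a b}) :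
    (#{a ∈ s | r a b} : ℝ) ≤ ε * #s := by
  rw [max_comm] at hmax
  simpa only [not_not] using card_filter_not_le_of_mem_highDegree _ hb
    (by simpa only [not_not] using hmax)

theorem card_mul_card_le [∀ a, DecidablePred (r a)] [∀ b, DecidablePred fun a => r a b]
    {s S : Finset α} {t T : Finset β} (hsS : s ⊆ S) (htT : t ⊆ T) {x y : ℝ}
    (hs : ∀ a ∈ s, (#{b ∈ T | ¬ r a b} : ℝ) ≤ x)
    (ht : ∀ b ∈ t, (#{a ∈ S | r a b} : ℝ) ≤ y) :
    (#s * #t : ℝ) ≤ #s * x + #t * y := by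
  have hsplit := card_interedges_add_card_interedges_compl r s t
  rw [← card_interedges_swap, card_interedges_eq_sum, card_interedges_eq_sum] at hsplit
  have hnon : ∑ a ∈ s, (#{b ∈ t | ¬ r a b} : ℝ) ≤ #s * x := by
    refine (sum_le_card_nsmul s _ x fun a ha => le_trans ?_ (hs a ha)).trans_eq
      (nsmul_eq_mul _ _)
    exact_mod_cast card_le_card (filter_subset_filter _ htT)
  have hadj : ∑ b ∈ t, (#{a ∈ s | r a b} : ℝ) ≤ #t * y := by
    refine (sum_le_card_nsmul t _ y fun b hb => le_trans ?_ (ht b hb)).trans_eq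
      (nsmul_eq_mul _ _)
    exact_mod_cast card_le_card (filter_subset_filter _ hsS)
  have : (#s * #t : ℝ) =
      ∑ b ∈ t, (#{a ∈ s | r a b} : ℝ) + ∑ a ∈ s, (#{b ∈ t | ¬ r a b} : ℝ) := by
    exact_mod_cast hsplit.symm
  linarith

end Rel

theorem lt_of_two_mul_mul_lt {ε s m n P : ℝ} (hε : 2 * ε ≤ s) (hm : 0 ≤ m) (hn : 0 ≤ n)
    (h : 2 * s * m * n < (P + 2 * ε * m) * n) : s * m < P := by
  by_contra! hP
  have : (P + 2 * ε * m) * n ≤ 2 * s * m * n := by gcongr; nlinarith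
  linarith

theorem mul_add_mul_lt_mul {s m n P Q : ℝ} (hs : 0 < s) (hs1 : s ≤ 1 / 2) (hm : 0 ≤ m)
    (hn : 0 ≤ n) (hP : s * m < P) (hQ : s * n < Q) :
    P * (s * s * n) + Q * (s * s * m) < P * Q := by
  have hP0 : 0 < P := (mul_nonneg hs.le hm).trans_lt hP
  have hQ0 : 0 < Q := (mul_nonneg hs.le hn).trans_lt hQ
  calc P * (s * s * n) + Q * (s * s * m) = s * (P * (s * n) + Q * (s * m)) := by ring
    _ < s * (P * Q + Q * P) := by gcongr
    _ = 2 * s * (P * Q) := by ring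
    _ ≤ P * Q := by nlinarith [mul_pos hP0 hQ0]

theorem stmt_3_general {α β : Type*} (r : α → β → Prop)
    [∀ a, DecidablePred (r a)] [∀ b, DecidablePred fun a => r a b]
    (U : Finset α) (W : Finset β)
    (ε : ℝ) (hε0 : 0 < ε) (hε1 : ε < 1 / 100)
    (U' : Finset α) (W' : Finset β) (hU'sub : U' ⊆ U) (hW'sub : W' ⊆ W)
    (hU'card : (1 - ε) * U.card ≤ U'.card) (hW'card : (1 - ε) * W.card ≤ W'.card)
    (hu : ∀ u ∈ U', (1 - ε) * W.card ≤
      max ((W.filter fun w => r u w).card : ℝ) ((W.filter fun w => ¬ r u w).card : ℝ))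
    (hw : ∀ w ∈ W', (1 - ε) * U.card ≤
      max ((U.filter fun u => r u w).card : ℝ) ((U.filter fun u => ¬ r u w).card : ℝ)) :
    ((Rel.interedges r U W).card : ℝ) ≤ 2 * Real.sqrt ε * U.card * W.card ∨
      (1 - 2 * Real.sqrt ε) * U.card * W.card ≤ ((Rel.interedges r U W).card : ℝ) := by
  set s := Real.sqrt ε
  have hs : 0 < s := Real.sqrt_pos.2 hε0
  have hss : s * s = ε := Real.mul_self_sqrt hε0.le
  have hs1 : s ≤ 1 / 2 := (Real.sqrt_le_left (by norm_num)).2 (by linarith)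
  have h2ε : 2 * ε ≤ s := by nlinarith
  set A := Rel.highDegree r U' W (ε * #W)
  set B := Rel.highDegree (fun w u => ¬ r u w) W' U (ε * #U)
  by_contra! hE
  have hA : s * #U < #A := lt_of_two_mul_mul_lt h2ε (by positivity) (by positivity)
    (hE.1.trans_le (Rel.card_interedges_le_card_highDegree r W hε0.le hU'sub hU'card))
  have hB : s * #W < #B := by
    have hcompl := Rel.card_interedges_add_card_interedges_swap_compl r U W
    have hEB :=
      Rel.card_interedges_le_card_highDegree (fun w u => ¬ r u w) U hε0.le hW'sub hW'card
    refine lt_of_two_mul_mul_lt (m := #W) (n := #U) h2ε (by positivity) (by positivity) ?_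
    rw [← Nat.cast_inj (R := ℝ), Nat.cast_add, Nat.cast_mul] at hcompl
    linarith [hE.2]
  have hAB : (#A * #B : ℝ) ≤ #A * (ε * #W) + #B * (ε * #U) :=
    Rel.card_mul_card_le r ((filter_subset _ _).trans hU'sub) ((filter_subset _ _).trans hW'sub)
      (fun u hu' => Rel.card_filter_not_le_of_mem_highDegree r hu' (hu u (mem_filter.1 hu').1))
      (fun w hw' =>
        Rel.card_filter_le_of_mem_highDegree_swap_compl r hw' (hw w (mem_filter.1 hw').1))
  rw [← hss] at hAB
  exact (mul_add_mul_lt_mul hs hs1 (by positivity) (by positivity) hA hB).not_ge hAB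

/-- Symmetry Lemma.  The bipartite graph `G = (U ∪ W, E)` is modelled by a
relation `r` between two (disjoint) vertex types; `|E| = (Rel.interedges r U W).card`. -/
theorem stmt_3 {α β : Type*} (r : α → β → Prop)
    [∀ a, DecidablePred (r a)] [∀ b, DecidablePred fun a => r a b]
    (U : Finset α) (W : Finset β) (hU : U.Nonempty) (hW : W.Nonempty)
    (ε : ℝ) (hε0 : 0 < ε) (hε1 : ε < 1 / 100)
    (U' : Finset α) (W' : Finset β) (hU'sub : U' ⊆ U) (hW'sub : W' ⊆ W)
    (hU'card : (1 - ε) * U.card ≤ U'.card) (hW'card : (1 - ε) * W.card ≤ W'.card)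
    (hu : ∀ u ∈ U', (1 - ε) * W.card ≤
      max ((W.filter fun w => r u w).card : ℝ) ((W.filter fun w => ¬ r u w).card : ℝ))
    (hw : ∀ w ∈ W', (1 - ε) * U.card ≤
      max ((U.filter fun u => r u w).card : ℝ) ((U.filter fun u => ¬ r u w).card : ℝ)) :
    ((Rel.interedges r U W).card : ℝ) ≤ 2 * Real.sqrt ε * U.card * W.card ∨
      (1 - 2 * Real.sqrt ε) * U.card * W.card ≤ ((Rel.interedges r U W).card : ℝ) :=
  stmt_3_general r U W ε hε0 hε1 U' W' hU'sub hW'sub hU'card hW'card hu hw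
end

section
/- Let 0 < ε < 1/100, let G = (V, E) be a finite graph, and let U, W ⊆ V be disjoint nonempty subsets that are both ε-good. Then the number of edges of G between U and W is at most 2√ε · |U||W| or at least (1 − 2√ε)|U||W|. -/
/-!
Split `U` into the part `U₁` adjacent to at least a `(1-ε)`-fraction of `W` and the rest `U₀`;
since `W` is `ε`-good, every vertex of `U₀` is adjacent to at most an `ε`-fraction of `W`.
Split `W` into `W₁` and `W₀` in the same way. Double counting the edges between `U₀` and `W₁`,
and between `W₀` and `U₁`, gives `|U₁||W₀| + |U₀||W₁| ≤ 2ε|U||W|`, so one of `U₁`, `U₀` has at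
most `2ε|U|` vertices. Hence `e(U, W)` is at most `3ε|U||W|` or at least `(1 - 3ε)|U||W|`, and
`3ε ≤ 2√ε`.
-/

/-- `X` is `ε`-good in the graph `G`: every vertex is adjacent to at most an `ε`-fraction
or at least a `(1-ε)`-fraction of `X`. -/
def EGood {V : Type*} [DecidableEq V] (G : SimpleGraph V) [DecidableRel G.Adj]
    (ε : ℝ) (X : Finset V) : Prop :=
  ∀ v : V, ((X.filter fun u => G.Adj v u).card : ℝ) ≤ ε * X.card ∨
    (1 - ε) * X.card ≤ ((X.filter fun u => G.Adj v u).card : ℝ)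

open Finset

namespace SimpleGraph

variable {V : Type*} (G : SimpleGraph V) [DecidableRel G.Adj]

theorem sum_card_filter_adj_comm (A B : Finset V) :
    ∑ a ∈ A, #(B.filter (G.Adj a)) = ∑ b ∈ B, #(A.filter (G.Adj b)) := by
  simp_rw [card_filter]
  rw [sum_comm]
  simp only [G.adj_comm]

theorem card_interedges_eq_sum (U W : Finset V) :
    #(G.interedges U W) = ∑ u ∈ U, #(W.filter (G.Adj u)) := by
  rw [interedges_def, card_filter, sum_product]
  simp_rw [card_filter]

noncomputable def densePart (ε : ℝ) (U W : Finset V) : Finset V :=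
  U.filter fun u => (1 - ε) * #W ≤ (#(W.filter (G.Adj u)) : ℝ)

theorem mul_card_densePart_le_card_interedges (ε : ℝ) (U W : Finset V) :
    (1 - ε) * #(G.densePart ε U W) * #W ≤ (#(G.interedges U W) : ℝ) := by
  rw [G.card_interedges_eq_sum, Nat.cast_sum, mul_comm (1 - ε), mul_assoc, ← nsmul_eq_mul]
  calc #(G.densePart ε U W) • ((1 - ε) * #W)
      ≤ ∑ u ∈ G.densePart ε U W, (#(W.filter (G.Adj u)) : ℝ) :=
        card_nsmul_le_sum _ _ _ fun _ hu => (mem_filter.1 hu).2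
    _ ≤ ∑ u ∈ U, (#(W.filter (G.Adj u)) : ℝ) :=
        sum_le_sum_of_subset_of_nonneg (filter_subset _ U) fun _ _ _ => Nat.cast_nonneg _

variable {G}

theorem card_mul_card_le_of_sparse_of_dense [DecidableEq V] {ε : ℝ} {A X B Y : Finset V}
    (hAX : A ⊆ X) (hBY : B ⊆ Y)
    (hsparse : ∀ a ∈ A, (#(Y.filter (G.Adj a)) : ℝ) ≤ ε * #Y)
    (hdense : ∀ b ∈ B, (1 - ε) * #X ≤ (#(X.filter (G.Adj b)) : ℝ)) :
    (#A * #B : ℝ) ≤ ε * (#A * #Y + #X * #B) := by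
  have hdense_A : ∀ b ∈ B, (#A : ℝ) - ε * #X ≤ #(A.filter (G.Adj b)) := by
    intro b hb
    have hsplit : X.filter (G.Adj b) ⊆ A.filter (G.Adj b) ∪ X \ A := by
      intro x hx
      rw [mem_filter] at hx
      by_cases hxA : x ∈ A
      · exact mem_union_left _ (mem_filter.2 ⟨hxA, hx.2⟩)
      · exact mem_union_right _ (mem_sdiff.2 ⟨hx.1, hxA⟩)
    have hcard : #(X.filter (G.Adj b)) + #A ≤ #(A.filter (G.Adj b)) + #X := by
      have := (card_le_card hsplit).trans (card_union_le _ _)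
      have := card_sdiff_add_card_eq_card hAX
      omega
    have : (#(X.filter (G.Adj b)) + #A : ℝ) ≤ #(A.filter (G.Adj b)) + #X := by
      exact_mod_cast hcard
    linarith [hdense b hb]
  have hlower : #B • ((#A : ℝ) - ε * #X) ≤ ∑ b ∈ B, (#(A.filter (G.Adj b)) : ℝ) :=
    card_nsmul_le_sum _ _ _ hdense_A
  have hupper : ∑ a ∈ A, (#(B.filter (G.Adj a)) : ℝ) ≤ #A • (ε * #Y) :=
    sum_le_card_nsmul _ _ _ fun a ha =>
      le_trans (by exact_mod_cast card_le_card (filter_subset_filter _ hBY)) (hsparse a ha)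
  have hcount : ∑ a ∈ A, (#(B.filter (G.Adj a)) : ℝ) = ∑ b ∈ B, (#(A.filter (G.Adj b)) : ℝ) := by
    exact_mod_cast G.sum_card_filter_adj_comm A B
  rw [nsmul_eq_mul] at hlower hupper
  linarith

end SimpleGraph

namespace EGood

open SimpleGraph

variable {V : Type*} [DecidableEq V] {G : SimpleGraph V} [DecidableRel G.Adj] {ε : ℝ}
  {U W : Finset V}

theorem card_filter_adj_le_of_mem_sdiff_densePart (hW : EGood G ε W) {u : V}
    (hu : u ∈ U \ G.densePart ε U W) : (#(W.filter (G.Adj u)) : ℝ) ≤ ε * #W := by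
  simp only [densePart, mem_sdiff, mem_filter, not_and, not_le] at hu
  exact (hW u).resolve_right (not_le.2 (hu.2 hu.1))

theorem card_interedges_le (hW : EGood G ε W) :
    (#(G.interedges U W) : ℝ) ≤
      #(G.densePart ε U W) * #W + ε * #(U \ G.densePart ε U W) * #W := by
  rw [G.card_interedges_eq_sum, Nat.cast_sum,
    ← sum_sdiff (s₁ := G.densePart ε U W) (filter_subset _ U)]
  have hsparse : ∑ u ∈ U \ G.densePart ε U W, (#(W.filter (G.Adj u)) : ℝ) ≤
      #(U \ G.densePart ε U W) • (ε * #W) :=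
    sum_le_card_nsmul _ _ _ fun _ hu => hW.card_filter_adj_le_of_mem_sdiff_densePart hu
  have hdense : ∑ u ∈ G.densePart ε U W, (#(W.filter (G.Adj u)) : ℝ) ≤
      #(G.densePart ε U W) • (#W : ℝ) :=
    sum_le_card_nsmul _ _ _ fun _ _ => by exact_mod_cast card_filter_le _ _
  rw [nsmul_eq_mul] at hsparse hdense
  linarith

theorem card_densePart_mul_le_or (hU : EGood G ε U) (hW : EGood G ε W) :
    (#(G.densePart ε U W) * #W : ℝ) ≤ 2 * ε * #U * #W ∨
      (#(U \ G.densePart ε U W) * #W : ℝ) ≤ 2 * ε * #U * #W := by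
  set U₁ := G.densePart ε U W
  set W₁ := G.densePart ε W U
  have hU₁ : U₁ ⊆ U := filter_subset _ _
  have hW₁ : W₁ ⊆ W := filter_subset _ _
  have h₁ : (#(U \ U₁) * #W₁ : ℝ) ≤ ε * (#(U \ U₁) * #W + #U * #W₁) :=
    card_mul_card_le_of_sparse_of_dense sdiff_subset hW₁
      (fun _ hu => hW.card_filter_adj_le_of_mem_sdiff_densePart hu)
      fun _ hw => (mem_filter.1 hw).2
  have h₂ : (#(W \ W₁) * #U₁ : ℝ) ≤ ε * (#(W \ W₁) * #U + #W * #U₁) :=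
    card_mul_card_le_of_sparse_of_dense sdiff_subset hU₁
      (fun _ hw => hU.card_filter_adj_le_of_mem_sdiff_densePart hw)
      fun _ hu => (mem_filter.1 hu).2
  have hUcard : (#(U \ U₁) + #U₁ : ℝ) = #U := by
    exact_mod_cast card_sdiff_add_card_eq_card hU₁
  have hWcard : (#(W \ W₁) + #W₁ : ℝ) = #W := by
    exact_mod_cast card_sdiff_add_card_eq_card hW₁
  rw [← hUcard, ← hWcard] at h₁ h₂ ⊢
  rcases le_total (#U₁ : ℝ) #(U \ U₁) with h | h
  · left
    linarith [mul_le_mul_of_nonneg_right h (Nat.cast_nonneg (α := ℝ) #W₁)]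
  · right
    linarith [mul_le_mul_of_nonneg_right h (Nat.cast_nonneg (α := ℝ) #(W \ W₁))]

end EGood

theorem three_mul_le_two_mul_sqrt {ε : ℝ} (h₀ : 0 ≤ ε) (h₁ : ε ≤ 4 / 9) : 3 * ε ≤ 2 * √ε := by
  have hsq := Real.sq_sqrt h₀
  nlinarith [Real.sqrt_nonneg ε]

theorem stmt_4_general {V : Type*} [DecidableEq V]
    (G : SimpleGraph V) [DecidableRel G.Adj]
    (ε : ℝ) (hε0 : 0 < ε) (hε1 : ε < 1 / 100)
    (U W : Finset V)
    (hUgood : EGood G ε U) (hWgood : EGood G ε W) :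
    ((G.interedges U W).card : ℝ) ≤ 2 * Real.sqrt ε * U.card * W.card ∨
      (1 - 2 * Real.sqrt ε) * U.card * W.card ≤ ((G.interedges U W).card : ℝ) := by
  have hε : 3 * ε ≤ 2 * √ε := three_mul_le_two_mul_sqrt hε0.le (by linarith)
  have hUW : (0 : ℝ) ≤ #U * #W := by positivity
  have hUcard : (#(U \ G.densePart ε U W) + #(G.densePart ε U W) : ℝ) = #U := by
    exact_mod_cast card_sdiff_add_card_eq_card (filter_subset _ U)
  rcases hUgood.card_densePart_mul_le_or hWgood with h | h
  · left
    have := hWgood.card_interedges_le (U := U)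
    have : (0 : ℝ) ≤ ε * #(G.densePart ε U W) * #W := by positivity
    rw [← hUcard] at h hUW ⊢
    linarith [mul_le_mul_of_nonneg_right hε hUW]
  · right
    have := G.mul_card_densePart_le_card_interedges ε U W
    have : (0 : ℝ) ≤ ε * #(U \ G.densePart ε U W) * #W := by positivity
    rw [← hUcard] at h hUW ⊢
    linarith [mul_le_mul_of_nonneg_right hε hUW]

/-- a pair of `ε`-good sets is homogeneous. -/
theorem stmt_4 {V : Type*} [Fintype V] [DecidableEq V]
    (G : SimpleGraph V) [DecidableRel G.Adj]
    (ε : ℝ) (hε0 : 0 < ε) (hε1 : ε < 1 / 100)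
    (U W : Finset V) (hUW : Disjoint U W) (hU : U.Nonempty) (hW : W.Nonempty)
    (hUgood : EGood G ε U) (hWgood : EGood G ε W) :
    ((G.interedges U W).card : ℝ) ≤ 2 * Real.sqrt ε * U.card * W.card ∨
      (1 - 2 * Real.sqrt ε) * U.card * W.card ≤ ((G.interedges U W).card : ℝ) :=
  stmt_4_general G ε hε0 hε1 U W hUgood hWgood
end

section
/- Let G = (U ∪ W, E) be a bipartite graph, b ∈ U, A ⊆ W, and set A₁ = N(b) ∩ A and A₀ = A ∖ N(b). Let d ≥ 0 and suppose A₁ contains the leaves of some d-tree of G with nodes in U, and A₀ contains the leaves of some d-tree of G with nodes in U. Then A contains the leaves of a (d+1)-tree of G with nodes in U. (In particular, if A₁ and A₀ are both nonempty then the rank of A is at least 1 + min(rank(A₁), rank(A₀)).) -/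
/-! Put `b₀` at the root, the `d`-tree with leaves in `A₁` below the child `1` and the one with
leaves in `A₀` below the child `0`. Inside each subtree the adjacency pattern is inherited, and
the root is adjacent to exactly the leaves of the `1`-subtree because they lie in `N(b₀)` while
those of the `0`-subtree do not. -/

/-- A `d`-tree of the bipartite graph given by the relation `r : α → β → Prop`
(vertices of the `U`-side have type `α`, so nodes automatically lie in `U`), with leaves
in `A ⊆ β`.  Binary strings are modelled as `List Bool`; `σ ◁ ρ` is "proper prefix",
which for `σ` of length `< d` and `ρ` of length `d` is just `σ <+: ρ`; `σ⌢1` is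
`σ ++ [true]`.  The nodes are `b σ` for `σ ∈ 2^{<d}` and the leaves are `a ρ` for
`ρ ∈ 2^d` (values of `b`, `a` on other strings are irrelevant). -/
def IsTree {α β : Type*} (r : α → β → Prop) (A : Set β) (d : ℕ)
    (b : List Bool → α) (a : List Bool → β) : Prop :=
  (∀ ρ : List Bool, ρ.length = d → a ρ ∈ A) ∧
    ∀ σ ρ : List Bool, σ.length < d → ρ.length = d → σ <+: ρ →
      (r (b σ) (a ρ) ↔ (σ ++ [true]) <+: ρ)

def branch {γ : Type*} (x : γ) (f₁ f₀ : List Bool → γ) : List Bool → γ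
  | [] => x
  | c :: σ => cond c (f₁ σ) (f₀ σ)

section branch

variable {α β : Type*} {r : α → β → Prop} {A A₁ A₀ : Set β} {d : ℕ} {b₀ : α}
  {f₁ f₀ : List Bool → α} {g₁ g₀ : List Bool → β}

theorem IsTree.branch (x : β) (h₁ : IsTree r A₁ d f₁ g₁) (h₀ : IsTree r A₀ d f₀ g₀)
    (hA₁ : A₁ ⊆ A) (hA₀ : A₀ ⊆ A) (hr₁ : ∀ w ∈ A₁, r b₀ w) (hr₀ : ∀ w ∈ A₀, ¬r b₀ w) :
    IsTree r A (d + 1) (branch b₀ f₁ f₀) (branch x g₁ g₀) := by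
  refine ⟨?leaves, ?edges⟩
  case leaves =>
    rintro (_ | ⟨c, ρ⟩) hρ
    · simp at hρ
    · replace hρ : ρ.length = d := by simpa using hρ
      cases c
      · exact hA₀ (h₀.1 ρ hρ)
      · exact hA₁ (h₁.1 ρ hρ)
  case edges =>
    rintro σ (_ | ⟨c, ρ⟩) hσ hρ hσρ
    · simp at hρ
    replace hρ : ρ.length = d := by simpa using hρ
    rcases σ with _ | ⟨c', σ⟩
    · cases c
      · simpa [_root_.branch] using hr₀ _ (h₀.1 ρ hρ)
      · simpa [_root_.branch] using hr₁ _ (h₁.1 ρ hρ)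
    · obtain ⟨rfl, hσρ₀⟩ := List.cons_prefix_cons.1 hσρ
      replace hσ : σ.length < d := by simpa using hσ
      cases c'
      · simpa [_root_.branch] using h₀.2 σ ρ hσ hρ hσρ₀
      · simpa [_root_.branch] using h₁.2 σ ρ hσ hρ hσρ₀

end branch

/-- if both `A₁ = N(b₀) ∩ A` and `A₀ = A ∖ N(b₀)` contain the leaves of a
`d`-tree with nodes in `U`, then `A` contains the leaves of a `(d+1)`-tree. -/
theorem stmt_13 {α β : Type*} (r : α → β → Prop) (b₀ : α) (A : Set β) (d : ℕ)
    (h₁ : ∃ f g, IsTree r {w | w ∈ A ∧ r b₀ w} d f g)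
    (h₀ : ∃ f g, IsTree r {w | w ∈ A ∧ ¬r b₀ w} d f g) :
    ∃ f g, IsTree r A (d + 1) f g := by
  obtain ⟨f₁, g₁, hT₁⟩ := h₁
  obtain ⟨f₀, g₀, hT₀⟩ := h₀
  exact ⟨_, _, hT₁.branch (g₁ []) hT₀ (fun _ hw ↦ hw.1) (fun _ hw ↦ hw.1)
    (fun _ hw ↦ hw.2) (fun _ hw ↦ hw.2)⟩
end

section
/- Let V be a set, R ⊆ V × V × V a ternary relation, and ℓ ≥ 2. Suppose R has ℓ-FOP₂, i.e., there exist a₁,…,a_ℓ, c₁,…,c_ℓ ∈ V and, for each function f : [ℓ]² → [ℓ], elements b₁^f,…,b_ℓ^f ∈ V, such that for all i,j,k ∈ [ℓ]: (a_i, b_j^f, c_k) ∈ R if and only if k ≤ f(i,j). Then the complement relation ¬R has (ℓ−1)-FOP₂: there exist a'₁,…,a'_{ℓ−1}, c'₁,…,c'_{ℓ−1} ∈ V and, for each g : [ℓ−1]² → [ℓ−1], elements b'₁^g,…,b'_{ℓ−1}^g ∈ V, such that for all i,j,k ∈ [ℓ−1]: (a'_i, b'^g_j, c'_k) ∉ R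 if and only if k ≤ g(i,j). -/
/-!
Index from `0`. Given `g : [n]² → [n]`, take the `(n+1)`-witnesses for any `f` with
`f i j = n - 1 - g i j` on the first `n` rows and columns, and read the `c`'s backwards:
`c'_k = c_{n-k}`. Then `¬ (n - k ≤ n - 1 - g i j)` holds exactly when `k ≤ g i j`.
-/

def HasFOP₂ {V : Type*} (R : V → V → V → Prop) (ℓ : ℕ) : Prop :=
  ∃ (a c : Fin ℓ → V) (b : (Fin ℓ → Fin ℓ → Fin ℓ) → Fin ℓ → V),
    ∀ (f : Fin ℓ → Fin ℓ → Fin ℓ) (i j k : Fin ℓ), R (a i) (b f j) (c k) ↔ k ≤ f i j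

theorem HasFOP₂.compl_of_succ {V : Type*} {R : V → V → V → Prop} {n : ℕ}
    (hR : HasFOP₂ R (n + 1)) : HasFOP₂ (fun x y z => ¬R x y z) n := by
  obtain ⟨a, c, b, h⟩ := hR
  let f (g : Fin n → Fin n → Fin n) (i j : Fin (n + 1)) : Fin (n + 1) :=
    Fin.lastCases 0 (fun i' => Fin.lastCases 0 (fun j' => (g i' j').rev.castSucc) j) i
  refine ⟨fun i => a i.castSucc, fun k => c k.rev.succ, fun g j => b (f g) j.castSucc, ?_⟩
  intro g i j k
  simp only [h, f, Fin.lastCases_castSucc, not_le, Fin.castSucc_lt_succ_iff, Fin.rev_le_rev]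

theorem stmt_14_general {V : Type*} (R : V → V → V → Prop) (ℓ : ℕ)
    (a c : Fin ℓ → V) (b : (Fin ℓ → Fin ℓ → Fin ℓ) → Fin ℓ → V)
    (h : ∀ (f : Fin ℓ → Fin ℓ → Fin ℓ) (i j k : Fin ℓ),
      R (a i) (b f j) (c k) ↔ k ≤ f i j) :
    ∃ (a' c' : Fin (ℓ - 1) → V)
      (b' : (Fin (ℓ - 1) → Fin (ℓ - 1) → Fin (ℓ - 1)) → Fin (ℓ - 1) → V),
      ∀ (g : Fin (ℓ - 1) → Fin (ℓ - 1) → Fin (ℓ - 1)) (i j k : Fin (ℓ - 1)),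
        ¬R (a' i) (b' g j) (c' k) ↔ k ≤ g i j := by
  cases ℓ with
  | zero => exact ⟨Fin.elim0, Fin.elim0, fun _ => Fin.elim0, fun _ i => i.elim0⟩
  | succ n => exact HasFOP₂.compl_of_succ ⟨a, c, b, h⟩

/-- if a ternary relation `R` has `ℓ-FOP₂` (`ℓ ≥ 2`), then its complement
has `(ℓ−1)-FOP₂`.  Here `[ℓ]` is modelled as `Fin ℓ` with its order. -/
theorem stmt_14 {V : Type*} (R : V → V → V → Prop) (ℓ : ℕ) (hℓ : 2 ≤ ℓ)
    (a c : Fin ℓ → V) (b : (Fin ℓ → Fin ℓ → Fin ℓ) → Fin ℓ → V)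
    (h : ∀ (f : Fin ℓ → Fin ℓ → Fin ℓ) (i j k : Fin ℓ),
      R (a i) (b f j) (c k) ↔ k ≤ f i j) :
    ∃ (a' c' : Fin (ℓ - 1) → V)
      (b' : (Fin (ℓ - 1) → Fin (ℓ - 1) → Fin (ℓ - 1)) → Fin (ℓ - 1) → V),
      ∀ (g : Fin (ℓ - 1) → Fin (ℓ - 1) → Fin (ℓ - 1)) (i j k : Fin (ℓ - 1)),
        ¬R (a' i) (b' g j) (c' k) ↔ k ≤ g i j :=
  stmt_14_general R ℓ a c b h
end

section
/- Let 𝒲₂ be the infinite 3-uniform hypergraph with vertex set {a_i, b_i, c_i : i ∈ ℕ} (all vertices distinct) and edge set { {a_i, b_j, c_j} : i ≤ j }. Then every finite induced sub-3-graph of 𝒲₂ on n vertices has at most n²/4 edges. -/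
/-!
Write `A`, `B`, `C` for the indices of the `a`-, `b`- and `c`-vertices of `V'`. Every edge
`{a_i, b_j, c_j}` of the induced sub-3-graph is determined by `(i, j) ∈ A × (B ∩ C)`, so there
are at most `|A| · |B ∩ C|` of them, while `|A| + 2 |B ∩ C| ≤ |V'| = n`. By AM-GM,
`|A| · |B ∩ C| ≤ (|A| + 2 |B ∩ C|)² / 8 ≤ n² / 8`.
-/

open Finset

lemma Finset.card_toLeft_add_two_mul_card_inter_le {α β : Type*} [DecidableEq β]
    (s : Finset (α ⊕ β ⊕ β)) :
    #s.toLeft + 2 * #(s.toRight.toLeft ∩ s.toRight.toRight) ≤ #s := by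
  have hB := card_le_card (inter_subset_left (s₁ := s.toRight.toLeft) (s₂ := s.toRight.toRight))
  have hC := card_le_card (inter_subset_right (s₁ := s.toRight.toLeft) (s₂ := s.toRight.toRight))
  have := card_toLeft_add_card_toRight (u := s.toRight)
  have := card_toLeft_add_card_toRight (u := s)
  omega

lemma ncard_induced_edges_le_card_mul_card {α : Type*} [LE α] [DecidableEq α]
    (s : Finset (α ⊕ α ⊕ α)) :
    {e : α × α | e.1 ≤ e.2 ∧ Sum.inl e.1 ∈ s ∧
        Sum.inr (Sum.inl e.2) ∈ s ∧ Sum.inr (Sum.inr e.2) ∈ s}.ncard ≤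
      #s.toLeft * #(s.toRight.toLeft ∩ s.toRight.toRight) := by
  rw [← card_product, ← Set.ncard_coe_finset]
  refine Set.ncard_le_ncard fun e ⟨_, ha, hb, hc⟩ => ?_
  simpa using ⟨ha, hb, hc⟩

lemma mul_le_add_two_mul_sq_div_eight (a b : ℝ) : a * b ≤ (a + 2 * b) ^ 2 / 8 := by
  nlinarith [sq_nonneg (a - 2 * b)]

/-- every finite induced sub-3-graph of `𝒲₂` on `n` vertices has at most
`n²/4` edges.  The vertex set `{a_i, b_i, c_i : i ∈ ℕ}` is modelled as `ℕ ⊕ ℕ ⊕ ℕ`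
(`a_i = .inl i`, `b_i = .inr (.inl i)`, `c_i = .inr (.inr i)`); the edge `{a_i, b_j, c_j}`
(for `i ≤ j`) is recorded by the pair `(i, j)`, so the edges of the sub-3-graph induced
on `V'` correspond exactly to the pairs counted below. -/
theorem stmt_16 (V' : Finset (ℕ ⊕ ℕ ⊕ ℕ)) :
    (({e : ℕ × ℕ | e.1 ≤ e.2 ∧ Sum.inl e.1 ∈ V' ∧
          Sum.inr (Sum.inl e.2) ∈ V' ∧ Sum.inr (Sum.inr e.2) ∈ V'}.ncard : ℝ)) ≤
      (V'.card : ℝ) ^ 2 / 4 := by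
  set a : ℕ := #V'.toLeft
  set d : ℕ := #(V'.toRight.toLeft ∩ V'.toRight.toRight)
  have hcard : (a : ℝ) + 2 * d ≤ #V' := by
    exact_mod_cast V'.card_toLeft_add_two_mul_card_inter_le
  calc _ ≤ (a : ℝ) * d := by exact_mod_cast ncard_induced_edges_le_card_mul_card V'
    _ ≤ ((a : ℝ) + 2 * d) ^ 2 / 8 := mul_le_add_two_mul_sq_div_eight _ _
    _ ≤ (#V' : ℝ) ^ 2 / 8 := by gcongr
    _ ≤ (#V' : ℝ) ^ 2 / 4 := by gcongr; norm_num
end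

section
/- (Bipartite induced counting lemma, explicit form) Let U, W be finite sets and R ⊆ U × W. Let (V_x)_{x ∈ U ∪ W} be pairwise disjoint nonempty finite vertex sets and let G = (V, E) be a graph on V = ∪_x V_x. Let η ≥ 0 and suppose that for every (u,w) ∈ R, |E ∩ K₂[V_u, V_w]| ≥ (1 − η)|V_u||V_w|, and for every (u,w) ∈ (U × W) ∖ R, |E ∩ K₂[V_u, V_w]| ≤ η|V_u||V_w|. Then the number of tuples (v_x)_{x ∈ U ∪ W} ∈ ∏_x V_x such that for all (u,w) ∈ U × W: {v_u, v_w} ∈ E if and only if (u,w) ∈ R, is at least (1 − |U||W|·η) · ∏_{x ∈ U ∪ W} |V_x|. -/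
/-!
Union bound over the pairs `(u, w)`. Fixing the coordinates `v_u, v_w` of a tuple leaves the
others free, so the proportion of tuples violating the condition at `(u, w)` equals the
proportion of bad pairs in `V_u × V_w`, which the density hypotheses bound by `η`.
-/

open Finset

namespace Fintype

variable {ι : Type*} [Fintype ι] [DecidableEq ι]

theorem sum_piFinset_apply_eq {α : ι → Type*} [∀ i, DecidableEq (α i)] {M : Type*}
    [AddCommMonoid M] (s : ∀ i, Finset (α i)) (i : ι) (f : α i → M) :
    ∑ g ∈ piFinset s, f (g i) = (∏ j ∈ univ.erase i, #(s j)) • ∑ a ∈ s i, f a := by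
  rw [← sum_fiberwise_of_maps_to (g := fun g => g i) fun g hg => mem_piFinset.1 hg i, smul_sum]
  refine Finset.sum_congr rfl fun a ha => ?_
  rw [Finset.sum_congr rfl fun g hg => congrArg f (mem_filter.1 hg).2, sum_const,
    card_filter_piFinset_eq_of_mem s i ha]

variable {κ α β : Type*} [Fintype κ] [DecidableEq κ] [DecidableEq α] [DecidableEq β]

theorem card_filter_piFinset_product_apply (s : ι → Finset α) (t : κ → Finset β) (i : ι)
    (k : κ) (p : α → β → Prop) [∀ a, DecidablePred (p a)] :
    #{x ∈ piFinset s ×ˢ piFinset t | p (x.1 i) (x.2 k)} =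
      (∏ j ∈ univ.erase i, #(s j)) * (∏ l ∈ univ.erase k, #(t l)) *
        #{x ∈ s i ×ˢ t k | p x.1 x.2} := by
  have hinner (g : ι → α) : ∑ h ∈ piFinset t, (if p (g i) (h k) then 1 else 0) =
      (∏ l ∈ univ.erase k, #(t l)) * ∑ b ∈ t k, if p (g i) b then 1 else 0 :=
    sum_piFinset_apply_eq t k fun b => if p (g i) b then 1 else 0
  rw [card_filter, card_filter, sum_product, sum_product]
  simp only [hinner, ← mul_sum]
  rw [sum_piFinset_apply_eq s i fun a => ∑ b ∈ t k, if p a b then 1 else 0, smul_eq_mul]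
  ring

theorem card_filter_piFinset_product_apply_le (s : ι → Finset α) (t : κ → Finset β) (i : ι)
    (k : κ) (p : α → β → Prop) [∀ a, DecidablePred (p a)] {η : ℝ}
    (h : (#{x ∈ s i ×ˢ t k | p x.1 x.2} : ℝ) ≤ η * #(s i) * #(t k)) :
    (#{x ∈ piFinset s ×ˢ piFinset t | p (x.1 i) (x.2 k)} : ℝ) ≤
      η * #(piFinset s ×ˢ piFinset t) := by
  rw [card_filter_piFinset_product_apply, card_product, card_piFinset, card_piFinset,
    ← mul_prod_erase univ _ (mem_univ i), ← mul_prod_erase univ _ (mem_univ k)]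
  push_cast
  have : (0 : ℝ) ≤ (∏ j ∈ univ.erase i, (#(s j) : ℝ)) * ∏ l ∈ univ.erase k, (#(t l) : ℝ) := by
    positivity
  nlinarith

end Fintype

namespace Finset

theorem card_le_card_filter_forall_add_sum {α ι : Type*} [Fintype ι]
    (T : Finset α) (P : ι → α → Prop) [∀ i, DecidablePred (P i)]
    [DecidablePred fun x => ∀ i, P i x] :
    #T ≤ #{x ∈ T | ∀ i, P i x} + ∑ i, #{x ∈ T | ¬P i x} := by
  classical
  calc #T ≤ #({x ∈ T | ∀ i, P i x} ∪ univ.biUnion fun i => {x ∈ T | ¬P i x}) :=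
        card_le_card fun x hx => by
          by_cases h : ∀ i, P i x
          · simp [hx, h]
          · push Not at h; simp [hx, h]
    _ ≤ _ := (card_union_le _ _).trans (Nat.add_le_add_left card_biUnion_le _)

end Finset

namespace SimpleGraph

theorem card_filter_not_adj_iff_le {V : Type*} (G : SimpleGraph V)
    [DecidableRel G.Adj] (s t : Finset V) (r : Prop) [Decidable r] {η : ℝ}
    (hdense : r → (1 - η) * #s * #t ≤ (#(G.interedges s t) : ℝ))
    (hsparse : ¬r → (#(G.interedges s t) : ℝ) ≤ η * #s * #t) :
    (#{x ∈ s ×ˢ t | ¬(G.Adj x.1 x.2 ↔ r)} : ℝ) ≤ η * #s * #t := by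
  by_cases hr : r
  · simp only [hr, iff_true]
    have hcompl : (#(G.interedges s t) : ℝ) + #{x ∈ s ×ˢ t | ¬G.Adj x.1 x.2} = #s * #t := by
      exact_mod_cast Rel.card_interedges_add_card_interedges_compl G.Adj s t
    linarith [hdense hr]
  · simpa only [hr, iff_false, not_not, interedges, Rel.interedges] using hsparse hr

end SimpleGraph

theorem stmt_17_general {ι κ V : Type*} [Fintype ι] [Fintype κ] [DecidableEq ι] [DecidableEq κ]
    [DecidableEq V] (G : SimpleGraph V) [DecidableRel G.Adj]
    (A : ι → Finset V) (B : κ → Finset V) (R : ι → κ → Prop) [∀ u, DecidablePred (R u)]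
    (η : ℝ)
    (hdense : ∀ u w, R u w →
      (1 - η) * (A u).card * (B w).card ≤ ((G.interedges (A u) (B w)).card : ℝ))
    (hsparse : ∀ u w, ¬R u w →
      ((G.interedges (A u) (B w)).card : ℝ) ≤ η * (A u).card * (B w).card) :
    (1 - (Fintype.card ι : ℝ) * (Fintype.card κ : ℝ) * η) *
        ((∏ u, ((A u).card : ℝ)) * ∏ w, ((B w).card : ℝ)) ≤
      (((Fintype.piFinset A ×ˢ Fintype.piFinset B).filter fun fg =>
          ∀ u w, G.Adj (fg.1 u) (fg.2 w) ↔ R u w).card : ℝ) := by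
  set T := Fintype.piFinset A ×ˢ Fintype.piFinset B
  have hT : (#T : ℝ) = (∏ u, (#(A u) : ℝ)) * ∏ w, (#(B w) : ℝ) := by
    simp [T, card_product, Fintype.card_piFinset]
  have hbad (uw : ι × κ) :
      (#{x ∈ T | ¬(G.Adj (x.1 uw.1) (x.2 uw.2) ↔ R uw.1 uw.2)} : ℝ) ≤ η * #T :=
    Fintype.card_filter_piFinset_product_apply_le A B uw.1 uw.2
      (fun a b => ¬(G.Adj a b ↔ R uw.1 uw.2)) <|
      G.card_filter_not_adj_iff_le _ _ _ (hdense uw.1 uw.2) (hsparse uw.1 uw.2)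
  have hunion := T.card_le_card_filter_forall_add_sum
    fun (uw : ι × κ) x => G.Adj (x.1 uw.1) (x.2 uw.2) ↔ R uw.1 uw.2
  rw [filter_congr fun x _ => Prod.forall] at hunion
  have hsum := Finset.sum_le_sum fun uw (_ : uw ∈ univ) => hbad uw
  simp only [sum_const, card_univ, Fintype.card_prod, nsmul_eq_mul] at hsum
  push_cast at hsum
  rw [← hT]
  have := (Nat.cast_le (α := ℝ)).2 hunion
  push_cast at this
  linarith

/-- bipartite induced counting lemma, explicit form.  The finite index
sets `U`, `W` are modelled as the finite types `ι`, `κ`, the relation `R ⊆ U × W` as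
`R : ι → κ → Prop`, and the vertex sets `(V_x)` as the families `A : ι → Finset V`,
`B : κ → Finset V` of pairwise disjoint nonempty finite sets.  Tuples in `∏_x V_x` are
pairs of choice functions, counted via `Fintype.piFinset`. -/
theorem stmt_17 {ι κ V : Type*} [Fintype ι] [Fintype κ] [DecidableEq ι] [DecidableEq κ]
    [DecidableEq V] (G : SimpleGraph V) [DecidableRel G.Adj]
    (A : ι → Finset V) (B : κ → Finset V) (R : ι → κ → Prop) [∀ u, DecidablePred (R u)]
    (hAne : ∀ u, (A u).Nonempty) (hBne : ∀ w, (B w).Nonempty)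
    (hAA : ∀ u u', u ≠ u' → Disjoint (A u) (A u'))
    (hBB : ∀ w w', w ≠ w' → Disjoint (B w) (B w'))
    (hAB : ∀ u w, Disjoint (A u) (B w))
    (η : ℝ) (hη : 0 ≤ η)
    (hdense : ∀ u w, R u w →
      (1 - η) * (A u).card * (B w).card ≤ ((G.interedges (A u) (B w)).card : ℝ))
    (hsparse : ∀ u w, ¬R u w →
      ((G.interedges (A u) (B w)).card : ℝ) ≤ η * (A u).card * (B w).card) :
    (1 - (Fintype.card ι : ℝ) * (Fintype.card κ : ℝ) * η) *
        ((∏ u, ((A u).card : ℝ)) * ∏ w, ((B w).card : ℝ)) ≤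
      (((Fintype.piFinset A ×ˢ Fintype.piFinset B).filter fun fg =>
          ∀ u w, G.Adj (fg.1 u) (fg.2 w) ↔ R u w).card : ℝ) :=
  stmt_17_general G A B R η hdense hsparse
end

section
/- Let k ≥ 1 and let U, W, Z₁, …, Z_k be pairwise disjoint nonempty finite sets, Z = Z₁ ∪ ⋯ ∪ Z_k, and let K₂[U,W] = P¹ ⊔ ⋯ ⊔ P^k be any partition. Let H = (V, E) be the 3-partite 3-graph with V = U ∪ W ∪ Z and E = { {u, w, z} : u ∈ U, w ∈ W, z ∈ Z_i, {u,w} ∈ P^α for some α ≤ i }. Then VC₂(H) ≤ 1; concretely, there do not exist vertices x₁, x₂, y₁, y₂ ∈ V and vertices z_S ∈ V for each S ⊆ {1,2} × {1,2} such that for all i, j ∈ {1,2} and all S: {x_i, y_j, z_S} ∈ E if and only if (i,j) ∈ S. -/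
/-!
Fix a vertex `v ∉ Z`. Its link is a bipartite graph in which the pair `{v, a}` (with `a ∈ U ∪ W`)
is joined to `b ∈ Z_i` exactly when `{v, a}` lies in some class `P^α` with `α ≤ i`. Such a
threshold relation is a Ferrers relation: it contains no induced matching `a – b, a' – b'`.
In a `VC₂`-shattering configuration one of `x₁, y₁` lies outside `Z`, say `x₁`; the edges
through `z_{{1,2}²}` put `y₁, y₂` on the same side of its link, and then the triples
`{x₁, y_j, z_{{(1,j)}}}` would form exactly such an induced matching.
-/

def ThresholdRel {ι α β : Type*} [LE ι] (A : ι → Set α) (B : ι → Set β) (a : α) (b : β) :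
    Prop :=
  ∃ i j, i ≤ j ∧ a ∈ A i ∧ b ∈ B j

theorem ThresholdRel.ferrers {ι α β : Type*} [LinearOrder ι] {A : ι → Set α} {B : ι → Set β}
    {a a' : α} {b b' : β} :
    ThresholdRel A B a b → ThresholdRel A B a' b' →
      ThresholdRel A B a' b ∨ ThresholdRel A B a b' := by
  rintro ⟨i, j, hij, ha, hb⟩ ⟨i', j', hij', ha', hb'⟩
  rcases le_total i' j with h | h
  · exact Or.inl ⟨i', j, h, ha', hb⟩
  · exact Or.inr ⟨i, j', hij.trans (h.trans hij'), ha, hb'⟩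

def binaryEdges {ι V : Type*} [LE ι] [DecidableEq V] (P : ι → Finset (V × V))
    (Z : ι → Finset V) : Set (Finset V) :=
  {e | ∃ i α : ι, α ≤ i ∧ ∃ u w z, (u, w) ∈ P α ∧ z ∈ Z i ∧ e = {u, w, z}}

namespace binaryEdges

variable {ι V : Type*} [LinearOrder ι] {U W : Finset V}
  {P : ι → Finset (V × V)} {Z : ι → Finset V}

abbrev PairRel (P : ι → Finset (V × V)) (Z : ι → Finset V) : Sym2 V → V → Prop :=
  ThresholdRel (fun α => Function.uncurry Sym2.mk '' (P α : Set (V × V)))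
    (fun i => (Z i : Set V))

theorem pairRel_mk (P : ι → Finset (V × V)) (Z : ι → Finset V) {α i : ι} (h : α ≤ i)
    {u w z : V} (hp : (u, w) ∈ P α) (hz : z ∈ Z i) : PairRel P Z s(u, w) z :=
  ⟨α, i, h, ⟨_, hp, rfl⟩, hz⟩

theorem notMem_of_pairRel (hPsub : ∀ α, P α ⊆ U ×ˢ W) (hUZ : ∀ i, Disjoint U (Z i))
    (hWZ : ∀ i, Disjoint W (Z i)) {v a b : V} (h : PairRel P Z s(v, a) b) (i : ι) :
    a ∉ Z i := by
  obtain ⟨α, -, -, ⟨⟨u, w⟩, hp, huw⟩, -⟩ := h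
  obtain ⟨hu, hw⟩ := Finset.mem_product.mp (hPsub α hp)
  have ha : a ∈ s(u, w) := by rw [show s(u, w) = s(v, a) from huw]; exact Sym2.mem_mk_right v a
  rcases Sym2.mem_iff.mp ha with rfl | rfl
  · exact Finset.disjoint_left.mp (hUZ i) hu
  · exact Finset.disjoint_left.mp (hWZ i) hw

theorem mem_iff_pairRel [DecidableEq V] (hUW : Disjoint U W) (hPsub : ∀ α, P α ⊆ U ×ˢ W)
    (hUZ : ∀ i, Disjoint U (Z i)) (hWZ : ∀ i, Disjoint W (Z i))
    {v a b : V} (hv : ∀ i, v ∉ Z i) :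
    {v, a, b} ∈ binaryEdges P Z ↔ PairRel P Z s(v, a) b ∨ PairRel P Z s(v, b) a := by
  constructor
  · rintro ⟨i, α, hαi, u, w, z, hp, hz, he⟩
    obtain ⟨hu, hw⟩ := Finset.mem_product.mp (hPsub α hp)
    have hmem : ∀ t, t = v ∨ t = a ∨ t = b ↔ t = u ∨ t = w ∨ t = z := by
      intro t; simpa using congrArg (t ∈ ·) he
    have huw : u ≠ w := fun h => Finset.disjoint_left.mp hUW hu (h ▸ hw)
    have huz : u ≠ z := fun h => Finset.disjoint_left.mp (hUZ i) hu (h ▸ hz)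
    have hwz : w ≠ z := fun h => Finset.disjoint_left.mp (hWZ i) hw (h ▸ hz)
    have hzv : z ≠ v := fun h => hv i (h ▸ hz)
    obtain ⟨p, hrel, hpv, hpz, hp'⟩ : ∃ p, PairRel P Z s(v, p) z ∧ p ≠ v ∧ p ≠ z ∧
        (p = v ∨ p = a ∨ p = b) := by
      rcases (hmem v).mp (Or.inl rfl) with rfl | rfl | rfl
      · exact ⟨w, pairRel_mk P Z hαi hp hz, huw.symm, hwz, (hmem w).mpr (by simp)⟩
      · exact ⟨u, Sym2.eq_swap ▸ pairRel_mk P Z hαi hp hz, huw, huz, (hmem u).mpr (by simp)⟩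
      · exact absurd rfl hzv
    have hz' := (hmem z).mpr (by simp)
    rcases hp' with h | rfl | rfl <;> rcases hz' with h' | rfl | rfl <;> simp_all
  · rintro (⟨α, i, hαi, ⟨⟨u, w⟩, hp, huw⟩, hz⟩ | ⟨α, i, hαi, ⟨⟨u, w⟩, hp, huw⟩, hz⟩) <;>
      rcases Sym2.eq_iff.mp huw with ⟨rfl, rfl⟩ | ⟨rfl, rfl⟩
    · exact ⟨i, α, hαi, _, _, _, hp, hz, rfl⟩
    · exact ⟨i, α, hαi, _, _, _, hp, hz, Finset.insert_comm _ _ _⟩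
    · exact ⟨i, α, hαi, _, _, _, hp, hz, by rw [Finset.pair_comm]⟩
    · exact ⟨i, α, hαi, _, _, _, hp, hz, by ext; simp; tauto⟩

theorem exists_mem_of_pairRel {s : Sym2 V} {z : V} (h : PairRel P Z s z) : ∃ i, z ∈ Z i :=
  let ⟨_, i, _, _, hz⟩ := h
  ⟨i, hz⟩

theorem forall_notMem_or_forall_notMem_of_mem [DecidableEq V] (hUW : Disjoint U W)
    (hPsub : ∀ α, P α ⊆ U ×ˢ W) (hUZ : ∀ i, Disjoint U (Z i)) (hWZ : ∀ i, Disjoint W (Z i))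
    {a b c : V} (he : {a, b, c} ∈ binaryEdges P Z) : (∀ i, a ∉ Z i) ∨ (∀ i, b ∉ Z i) := by
  obtain ⟨-, α, -, u, w, z, hp, -, he⟩ := he
  obtain ⟨hu, hw⟩ := Finset.mem_product.mp (hPsub α hp)
  have huw : u ≠ w := fun h => Finset.disjoint_left.mp hUW hu (h ▸ hw)
  have hu' : u = a ∨ u = b ∨ u = c := by simpa using congrArg (u ∈ ·) he
  have hw' : w = a ∨ w = b ∨ w = c := by simpa using congrArg (w ∈ ·) he
  have hUZ' := fun i => Finset.disjoint_left.mp (hUZ i) hu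
  have hWZ' := fun i => Finset.disjoint_left.mp (hWZ i) hw
  rcases hu' with rfl | rfl | rfl
  · exact Or.inl hUZ'
  · exact Or.inr hUZ'
  rcases hw' with rfl | rfl | rfl
  · exact Or.inl hWZ'
  · exact Or.inr hWZ'
  · exact absurd rfl huw

theorem link_ferrers [DecidableEq V] (hUW : Disjoint U W) (hPsub : ∀ α, P α ⊆ U ×ˢ W)
    (hUZ : ∀ i, Disjoint U (Z i)) (hWZ : ∀ i, Disjoint W (Z i)) {v a a' b b' c : V}
    (hv : ∀ i, v ∉ Z i) (hac : {v, a, c} ∈ binaryEdges P Z)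
    (ha'c : {v, a', c} ∈ binaryEdges P Z) (hab : {v, a, b} ∈ binaryEdges P Z)
    (ha'b' : {v, a', b'} ∈ binaryEdges P Z) :
    {v, a', b} ∈ binaryEdges P Z ∨ {v, a, b'} ∈ binaryEdges P Z := by
  simp only [mem_iff_pairRel hUW hPsub hUZ hWZ hv] at *
  have notMem {p q} (h : PairRel P Z s(v, p) q) : ∀ i, p ∉ Z i :=
    notMem_of_pairRel hPsub hUZ hWZ h
  -- exactly one vertex of a link edge lies in `Z`, so `a` and `a'` lie on the same side
  have side {p q} (h : PairRel P Z s(v, p) q ∨ PairRel P Z s(v, q) p) :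
      (∃ i, p ∈ Z i) ↔ ¬∃ i, q ∈ Z i := by
    rcases h with h | h
    · exact iff_of_false (fun ⟨i, hi⟩ => notMem h i hi) (not_not.mpr (exists_mem_of_pairRel h))
    · exact iff_of_true (exists_mem_of_pairRel h) (fun ⟨i, hi⟩ => notMem h i hi)
  by_cases ha : ∃ i, a ∈ Z i
  · have ha' : ∃ i, a' ∈ Z i := (side ha'c).mpr ((side hac).mp ha)
    have hba := hab.resolve_left fun h => ha.elim (notMem h)
    have hb'a' := ha'b'.resolve_left fun h => ha'.elim (notMem h)
    rcases hba.ferrers hb'a' with h | h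
    · exact Or.inr (Or.inr h)
    · exact Or.inl (Or.inr h)
  · have ha' : ¬∃ i, a' ∈ Z i := fun ha' => ha ((side hac).mpr ((side ha'c).mp ha'))
    have hab := hab.resolve_right fun h => ha (exists_mem_of_pairRel h)
    have ha'b' := ha'b'.resolve_right fun h => ha' (exists_mem_of_pairRel h)
    rcases hab.ferrers ha'b' with h | h
    · exact Or.inl (Or.inl h)
    · exact Or.inr (Or.inl h)

end binaryEdges

theorem stmt_18_general {V : Type*} [DecidableEq V] (k : ℕ)
    (U W : Finset V) (Z : Fin k → Finset V)
    (hUW : Disjoint U W) (hUZ : ∀ i, Disjoint U (Z i)) (hWZ : ∀ i, Disjoint W (Z i))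
    (P : Fin k → Finset (V × V))
    (hPsub : ∀ α, P α ⊆ U ×ˢ W)
    (E : Set (Finset V))
    (hE : E = {e | ∃ i α : Fin k, α ≤ i ∧
      ∃ u w z, (u, w) ∈ P α ∧ z ∈ Z i ∧ e = {u, w, z}}) :
    ¬∃ (x y : Fin 2 → V) (z : Finset (Fin 2 × Fin 2) → V),
        ∀ (i j : Fin 2) (S : Finset (Fin 2 × Fin 2)),
          ({x i, y j, z S} : Finset V) ∈ E ↔ (i, j) ∈ S := by
  rintro ⟨x, y, z, hxyz⟩
  replace hE : E = binaryEdges P Z := hE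
  subst hE
  have hyxz (i j S) : ({y j, x i, z S} : Finset V) ∈ binaryEdges P Z ↔ (i, j) ∈ S := by
    rw [Finset.insert_comm]; exact hxyz i j S
  have hxy_univ (i j) := (hxyz i j Finset.univ).mpr (Finset.mem_univ _)
  have hyx_univ (i j) := (hyxz i j Finset.univ).mpr (Finset.mem_univ _)
  have hxy_single (i j) := (hxyz i j {(i, j)}).mpr (Finset.mem_singleton_self _)
  have hyx_single (i j) := (hyxz i j {(i, j)}).mpr (Finset.mem_singleton_self _)
  rcases binaryEdges.forall_notMem_or_forall_notMem_of_mem hUW hPsub hUZ hWZ (hxy_univ 0 0)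
    with hx | hy
  · have := binaryEdges.link_ferrers hUW hPsub hUZ hWZ hx (hxy_univ 0 0) (hxy_univ 0 1)
      (hxy_single 0 0) (hxy_single 0 1)
    simp [hxyz] at this
  · have := binaryEdges.link_ferrers hUW hPsub hUZ hWZ hy (hyx_univ 0 0) (hyx_univ 1 0)
      (hyx_single 0 0) (hyx_single 1 0)
    simp [hyxz] at this

/-- the "binary" 3-partite 3-graph built from any partition
`K₂[U,W] = P¹ ⊔ ⋯ ⊔ P^k` (edges `{u,w,z}` with `z ∈ Z_i`, `{u,w} ∈ P^α`, `α ≤ i`) has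
`VC₂`-dimension at most `1`: no configuration `x₁,x₂,y₁,y₂,(z_S)_{S ⊆ {1,2}²}` with
`{x_i, y_j, z_S} ∈ E ↔ (i,j) ∈ S` exists.  Pairs of `K₂[U,W]` are modelled as ordered
pairs in `U ×ˢ W` (faithful since `U` and `W` are disjoint); edges are unordered
3-element sets, modelled as `Finset`s. -/
theorem stmt_18 {V : Type*} [DecidableEq V] (k : ℕ) (hk : 1 ≤ k)
    (U W : Finset V) (Z : Fin k → Finset V)
    (hU : U.Nonempty) (hW : W.Nonempty) (hZ : ∀ i, (Z i).Nonempty)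
    (hUW : Disjoint U W) (hUZ : ∀ i, Disjoint U (Z i)) (hWZ : ∀ i, Disjoint W (Z i))
    (hZZ : ∀ i j, i ≠ j → Disjoint (Z i) (Z j))
    (P : Fin k → Finset (V × V))
    (hPsub : ∀ α, P α ⊆ U ×ˢ W)
    (hPdisj : ∀ α β, α ≠ β → Disjoint (P α) (P β))
    (hPcover : U ×ˢ W = Finset.univ.biUnion P)
    (E : Set (Finset V))
    (hE : E = {e | ∃ i α : Fin k, α ≤ i ∧
      ∃ u w z, (u, w) ∈ P α ∧ z ∈ Z i ∧ e = {u, w, z}}) :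
    ¬∃ (x y : Fin 2 → V) (z : Finset (Fin 2 × Fin 2) → V),
        ∀ (i j : Fin 2) (S : Finset (Fin 2 × Fin 2)),
          ({x i, y j, z S} : Finset V) ∈ E ↔ (i, j) ∈ S :=
  stmt_18_general k U W Z hUW hUZ hWZ P hPsub E hE
end
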